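/- For all real parameters α, β, γ and k ≠ 0, the function c(x,y,z) = α x² + β y² + (4γ/k²) sinh²(kz/2) is a Casimir function of the deformed bracket {·,·}_* on ℝ³: {c, f}_* = 0 for every smooth function f: ℝ³ → ℝ. -/

import Mathlib

noncomputable def proj3 (i : Fin 3) : (Fin 3 → ℝ) →L[ℝ] ℝ :=
  ContinuousLinearMap.proj i

@[simp] lemma proj3_apply (i : Fin 3) (v : Fin 3 → ℝ) : proj3 i v = v i := rfl



/-- The `i`-th partial derivative of `f : ℝⁿ → ℝ` at `v`. -/
noncomputable def pd {n : ℕ} (i : Fin n) (f : (Fin n → ℝ) → ℝ) (v : Fin n → ℝ) : ℝ :=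
  fderiv ℝ f v (Pi.single i 1)

/-- The deformed bracket on `ℝ³` with coordinates `(x,y,z) = (v 0, v 1, v 2)`:
`{f,g}_* = αx(∂_y f ∂_z g − ∂_z f ∂_y g) + βy(∂_z f ∂_x g − ∂_x f ∂_z g)
         + (γ sinh(kz)/k)(∂_x f ∂_y g − ∂_y f ∂_x g)`,
so `{y,z}_* = αx`, `{z,x}_* = βy`, `{x,y}_* = γ sinh(kz)/k`. -/
noncomputable def defBr (α β γ k : ℝ) (f g : (Fin 3 → ℝ) → ℝ) (v : Fin 3 → ℝ) : ℝ :=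
  α * v 0 * (pd 1 f v * pd 2 g v - pd 2 f v * pd 1 g v)
  + β * v 1 * (pd 2 f v * pd 0 g v - pd 0 f v * pd 2 g v)
  + (γ * Real.sinh (k * v 2) / k) * (pd 0 f v * pd 1 g v - pd 1 f v * pd 0 g v)

/-- `c = αx² + βy² + (4γ/k²) sinh²(kz/2)` is a Casimir function of the deformed
bracket on `ℝ³`. -/
theorem deformed_casimir (α β γ k : ℝ) (hk : k ≠ 0) :
    ∀ f : (Fin 3 → ℝ) → ℝ, ContDiff ℝ (⊤ : ℕ∞) f →
      defBr α β γ k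
        (fun v => α * v 0 ^ 2 + β * v 1 ^ 2
          + (4 * γ / k ^ 2) * Real.sinh (k * v 2 / 2) ^ 2) f = 0 := by
  intro f hf
  funext v
  set c : (Fin 3 → ℝ) → ℝ := fun v => α * v 0 ^ 2 + β * v 1 ^ 2
      + (4 * γ / k ^ 2) * Real.sinh (k * v 2 / 2) ^ 2 with hcdef
  have h0 : HasFDerivAt (fun v : Fin 3 → ℝ => v 0)
      (proj3 0) v := hasFDerivAt_apply 0 v
  have h1 : HasFDerivAt (fun v : Fin 3 → ℝ => v 1)
      (proj3 1) v := hasFDerivAt_apply 1 v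
  have hu : HasFDerivAt (fun v : Fin 3 → ℝ => k * v 2 / 2)
      ((k / 2) • proj3 2) v := by
    have h2 : HasFDerivAt (fun v : Fin 3 → ℝ => v 2)
        (proj3 2) v := hasFDerivAt_apply 2 v
    have := h2.const_smul (k / 2)
    have e : (fun v : Fin 3 → ℝ => k * v 2 / 2) = (k / 2) • fun v : Fin 3 → ℝ => v 2 := by
      funext w; simp only [Pi.smul_apply, smul_eq_mul]; ring
    rw [e]; exact this
  have hs : HasFDerivAt (fun v : Fin 3 → ℝ => Real.sinh (k * v 2 / 2))
      (Real.cosh (k * v 2 / 2) • ((k / 2) • proj3 2)) v :=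
    (Real.hasDerivAt_sinh _).comp_hasFDerivAt v hu
  have hc : HasFDerivAt c
      ((α • ((v 0 • proj3 0) + (v 0 • proj3 0)))
        + (β • ((v 1 • proj3 1) + (v 1 • proj3 1)))
        + ((4 * γ / k ^ 2) •
            ((Real.sinh (k * v 2 / 2) •
                (Real.cosh (k * v 2 / 2) • ((k / 2) • proj3 2)))
              + (Real.sinh (k * v 2 / 2) •
                (Real.cosh (k * v 2 / 2) • ((k / 2) • proj3 2)))))) v := by
    have e : c = fun v => α * (v 0 * v 0) + β * (v 1 * v 1)
        + (4 * γ / k ^ 2) * (Real.sinh (k * v 2 / 2) * Real.sinh (k * v 2 / 2)) := by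
      funext w; simp [hcdef]; ring
    rw [e]
    exact (((h0.mul h0).const_mul α).add ((h1.mul h1).const_mul β)).add
      ((hs.mul hs).const_mul (4 * γ / k ^ 2))
  have hpd : ∀ i : Fin 3, pd i c v = _ := fun i => by
    rw [pd, hc.fderiv]
  have e0 : pd 0 c v = 2 * α * v 0 := by
    rw [pd, hc.fderiv]
    simp [Pi.single_eq_same]
    ring
  have e1 : pd 1 c v = 2 * β * v 1 := by
    rw [pd, hc.fderiv]
    simp [Pi.single_eq_same]
    ring
  have e2 : pd 2 c v = 2 * γ / k * Real.sinh (k * v 2) := by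
    rw [pd, hc.fderiv]
    have : k * v 2 = 2 * (k * v 2 / 2) := by ring
    rw [this, Real.sinh_two_mul]
    simp [Pi.single_eq_same]
    field_simp
    ring
  rw [defBr, e0, e1, e2, Pi.zero_apply]
  have : k * v 2 = 2 * (k * v 2 / 2) := by ring
  rw [this, Real.sinh_two_mul]
  field_simp
  ring
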